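/- arXiv:2412.17723 — 2 statements merged into one kernel-verified Lean document; each statement's English description precedes it below -/
import Mathlib

section
/- Let h: R^d → R be L-smooth and μ-strongly convex with μ ≤ L. Then for all x, y, z in the domain of h: ⟨∇h(x), z - y⟩ ≥ h(z) - h(y) + (μ/4)‖y - z‖² - L‖z - x‖². -/
open RealInnerProductSpace

/-- Perturbed strong convexity: for an L-smooth, μ-strongly convex h with μ ≤ L,
⟨∇h(x), z - y⟩ ≥ h(z) - h(y) + (μ/4)‖y - z‖² - L‖z - x‖². -/
theorem stmt_7 {d : ℕ} (h : EuclideanSpace ℝ (Fin d) → ℝ)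
    (g : EuclideanSpace ℝ (Fin d) → EuclideanSpace ℝ (Fin d)) (L μ : ℝ)
    (hμ : 0 < μ) (hμL : μ ≤ L)
    (hgrad : ∀ x, HasGradientAt h (g x) x)
    (hsmooth : ∀ u v, ‖g u - g v‖ ≤ L * ‖u - v‖)
    (hsc : ∀ u v, h v ≥ h u + ⟪g u, v - u⟫ + μ / 2 * ‖v - u‖ ^ 2) :
    ∀ x y z, ⟪g x, z - y⟫ ≥ h z - h y + μ / 4 * ‖y - z‖ ^ 2 - L * ‖z - x‖ ^ 2 := by
  intro x y z
  have h1 := hsc z x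
  have h2 := hsc x y
  -- Cauchy-Schwarz + Lipschitz bound
  have cs : |⟪g z - g x, x - z⟫| ≤ ‖g z - g x‖ * ‖x - z‖ := abs_real_inner_le_norm _ _
  have lip : ‖g z - g x‖ ≤ L * ‖z - x‖ := hsmooth z x
  have hnorm : ‖x - z‖ = ‖z - x‖ := norm_sub_rev _ _
  have hxz : (0:ℝ) ≤ ‖z - x‖ := norm_nonneg _
  have hyx : (0:ℝ) ≤ ‖y - x‖ := norm_nonneg _
  have cs' : ⟪g z - g x, x - z⟫ ≥ -(L * ‖z - x‖ ^ 2) := by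
    have h3 : -(‖g z - g x‖ * ‖x - z‖) ≤ ⟪g z - g x, x - z⟫ := neg_abs_le _ |>.trans' (by
      have := abs_nonneg (⟪g z - g x, x - z⟫); linarith [neg_abs_le (⟪g z - g x, x - z⟫), cs])
    have h4 : ‖g z - g x‖ * ‖x - z‖ ≤ L * ‖z - x‖ ^ 2 := by
      rw [hnorm]
      calc ‖g z - g x‖ * ‖z - x‖ ≤ (L * ‖z - x‖) * ‖z - x‖ :=
            mul_le_mul_of_nonneg_right lip hxz
        _ = L * ‖z - x‖ ^ 2 := by ring
    linarith
  -- linearity of inner product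
  have lin1 : ⟪g z, x - z⟫ = ⟪g x, x - z⟫ + ⟪g z - g x, x - z⟫ := by
    rw [inner_sub_left]; ring
  have lin2 : ⟪g x, z - y⟫ = -⟪g x, x - z⟫ - ⟪g x, y - x⟫ := by
    have e1 : (z : EuclideanSpace ℝ (Fin d)) - y = -(x - z) - (y - x) := by abel
    rw [e1, inner_sub_right, inner_neg_right]
  -- triangle inequality
  have tri : ‖y - z‖ ≤ ‖y - x‖ + ‖x - z‖ := norm_sub_le_norm_sub_add_norm_sub _ _ _
  have tri2 : ‖y - z‖ ^ 2 ≤ 2 * ‖y - x‖ ^ 2 + 2 * ‖z - x‖ ^ 2 := by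
    have hyz : (0:ℝ) ≤ ‖y - z‖ := norm_nonneg _
    nlinarith [sq_nonneg (‖y - x‖ - ‖x - z‖), hnorm]
  have hnorm2 : ‖x - z‖ ^ 2 = ‖z - x‖ ^ 2 := by rw [hnorm]
  rw [hnorm2, lin1] at h1
  have tri3 : μ / 4 * ‖y - z‖ ^ 2 ≤ μ / 2 * ‖y - x‖ ^ 2 + μ / 2 * ‖z - x‖ ^ 2 := by
    nlinarith [tri2]
  have mono : μ / 2 * ‖z - x‖ ^ 2 ≤ L / 2 * ‖z - x‖ ^ 2 := by nlinarith [sq_nonneg (‖z - x‖)]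
  linarith [h1, h2, cs', lin1, lin2, tri3, mono, hnorm2, sq_nonneg (‖z - x‖)]
end

section
/- Let C ≥ 2, 1 ≤ J ≤ C, and I ≥ 1. Let x_1,...,x_C be fixed vectors in R^d with mean x̄ and variance ν², and let ψ be a uniformly random permutation of {1,...,C}. Define p_{c,i}(k) = I-1 if k ≤ c-1 and p_{c,i}(k) = i-1 if k = c. Then ∑_{c=1}^J ∑_{i=0}^{I-1} E[‖∑_{k=1}^{c} ∑_{j=0}^{p_{c,i}(k)} (X_{ψ_k} - x̄)‖²] ≤ (1/2) J² I³ ν². -/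
/-! Put `y k = x k - x̄`, so that `∑ k, y k = 0`. The vector inside the norm is `∑ k, w k • y (ψ k)`
with nonnegative weights `w = (I, …, I, i, 0, …, 0)`. Expanding the square, each diagonal term
averages over `ψ` to `w k ^ 2 * ν²`, while for `k ≠ l` the sum of `⟪y (ψ k), y (ψ l)⟫` over `ψ` is
nonpositive: it does not depend on `l ≠ k`, and its sum over all `l`, diagonal included, vanishes.
Hence the `(c, i)` term is at most `((c - 1) * I ^ 2 + i ^ 2) * ν²`, and summing, with
`∑ i < I, i ^ 2 ≤ I ^ 3 / 2`, gives the bound `J ^ 2 * I ^ 3 / 2 * ν²`. -/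

open Finset

section PermutationSampling

variable {ι : Type*} [Fintype ι] [DecidableEq ι]

theorem card_nsmul_sum_perm_apply {M : Type*} [AddCommMonoid M] (f : ι → M) (k : ι) :
    Fintype.card ι • ∑ ψ : Equiv.Perm ι, f (ψ k) = Fintype.card (Equiv.Perm ι) • ∑ a, f a := by
  have hk : ∀ k', ∑ ψ : Equiv.Perm ι, f (ψ k') = ∑ ψ : Equiv.Perm ι, f (ψ k) := fun k' =>
    calc ∑ ψ : Equiv.Perm ι, f (ψ k')
        = ∑ ψ : Equiv.Perm ι, f ((ψ * Equiv.swap k k') k') :=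
          (Equiv.sum_comp (Equiv.mulRight (Equiv.swap k k')) _).symm
      _ = ∑ ψ : Equiv.Perm ι, f (ψ k) := by
          simp only [Equiv.Perm.mul_apply, Equiv.swap_apply_right]
  calc Fintype.card ι • ∑ ψ : Equiv.Perm ι, f (ψ k)
      = ∑ k' : ι, ∑ ψ : Equiv.Perm ι, f (ψ k') := by
        simp only [hk, sum_const, card_univ]
    _ = ∑ ψ : Equiv.Perm ι, ∑ a, f a := by
        rw [sum_comm]
        exact sum_congr rfl fun ψ _ => Equiv.sum_comp ψ f
    _ = Fintype.card (Equiv.Perm ι) • ∑ a, f a := by simp only [sum_const, card_univ]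

variable {E : Type*} [NormedAddCommGroup E] [InnerProductSpace ℝ E]

theorem sum_perm_inner_apply_nonpos {y : ι → E} (hy : ∑ a, y a = 0) {k l : ι} (hkl : k ≠ l) :
    ∑ ψ : Equiv.Perm ι, inner ℝ (y (ψ k)) (y (ψ l)) ≤ 0 := by
  set S : ι → ℝ := fun m => ∑ ψ : Equiv.Perm ι, inner ℝ (y (ψ k)) (y (ψ m))
  have hS : ∀ m ∈ univ.erase k, S m = S l := fun m hm =>
    calc S m = ∑ ψ : Equiv.Perm ι,
          inner ℝ (y ((ψ * Equiv.swap l m) k)) (y ((ψ * Equiv.swap l m) m)) :=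
          (Equiv.sum_comp (Equiv.mulRight (Equiv.swap l m)) _).symm
      _ = S l := by
          simp only [Equiv.Perm.mul_apply, Equiv.swap_apply_right,
            Equiv.swap_apply_of_ne_of_ne hkl (ne_of_mem_erase hm).symm, S]
  have htotal : S k + #(univ.erase k) • S l = 0 := by
    rw [← sum_const, ← sum_congr rfl hS, add_sum_erase _ _ (mem_univ k)]
    simp only [S]
    rw [sum_comm]
    refine sum_eq_zero fun ψ _ => ?_
    rw [← inner_sum, Equiv.sum_comp ψ y, hy, inner_zero_right]
  have hdiag : 0 ≤ S k := sum_nonneg fun ψ _ => real_inner_self_nonneg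
  have hcard : 0 < #(univ.erase k) := card_pos.mpr ⟨l, mem_erase.mpr ⟨hkl.symm, mem_univ l⟩⟩
  rw [nsmul_eq_mul] at htotal
  show S l ≤ 0
  exact nonpos_of_mul_nonpos_right (a := (#(univ.erase k) : ℝ)) (by linarith)
    (by exact_mod_cast hcard)

theorem perm_average_apply (f : ι → ℝ) (k : ι) :
    (Fintype.card (Equiv.Perm ι) : ℝ)⁻¹ * ∑ ψ : Equiv.Perm ι, f (ψ k)
      = (Fintype.card ι : ℝ)⁻¹ * ∑ a, f a := by
  have h := card_nsmul_sum_perm_apply f k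
  rw [nsmul_eq_mul, nsmul_eq_mul] at h
  have hι : (Fintype.card ι : ℝ) ≠ 0 := Nat.cast_ne_zero.mpr (Fintype.card_pos_iff.mpr ⟨k⟩).ne'
  have hP : (Fintype.card (Equiv.Perm ι) : ℝ) ≠ 0 := Nat.cast_ne_zero.mpr Fintype.card_ne_zero
  field_simp
  linarith

theorem sum_perm_norm_sum_smul_sq_le {y : ι → E} (hy : ∑ a, y a = 0) {w : ι → ℝ}
    (hw : ∀ k, 0 ≤ w k) :
    ∑ ψ : Equiv.Perm ι, ‖∑ k, w k • y (ψ k)‖ ^ 2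
      ≤ ∑ k, w k ^ 2 * ∑ ψ : Equiv.Perm ι, ‖y (ψ k)‖ ^ 2 := by
  have hexpand : ∀ ψ : Equiv.Perm ι, ‖∑ k, w k • y (ψ k)‖ ^ 2
      = ∑ k, ∑ l, w k * w l * inner ℝ (y (ψ k)) (y (ψ l)) := fun ψ => by
    simp only [← real_inner_self_eq_norm_sq, sum_inner, inner_sum, real_inner_smul_left,
      real_inner_smul_right]
    exact sum_comm.trans (sum_congr rfl fun _ _ => sum_congr rfl fun _ _ => by ring)
  calc ∑ ψ : Equiv.Perm ι, ‖∑ k, w k • y (ψ k)‖ ^ 2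
      = ∑ k, ∑ l, w k * w l * ∑ ψ : Equiv.Perm ι, inner ℝ (y (ψ k)) (y (ψ l)) := by
        simp only [hexpand, mul_sum]
        rw [sum_comm]
        exact sum_congr rfl fun k _ => sum_comm
    _ ≤ ∑ k, w k * w k * ∑ ψ : Equiv.Perm ι, inner ℝ (y (ψ k)) (y (ψ k)) := by
        refine sum_le_sum fun k _ => ?_
        rw [← add_sum_erase _ _ (mem_univ k), add_le_iff_nonpos_right]
        exact sum_nonpos fun l hl => mul_nonpos_of_nonneg_of_nonpos
          (mul_nonneg (hw k) (hw l)) (sum_perm_inner_apply_nonpos hy (ne_of_mem_erase hl).symm)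
    _ = ∑ k, w k ^ 2 * ∑ ψ : Equiv.Perm ι, ‖y (ψ k)‖ ^ 2 := by
        simp only [real_inner_self_eq_norm_sq, sq]

theorem perm_average_norm_smul_sum_add_smul_sq_le {y : ι → E} (hy : ∑ a, y a = 0)
    (s : Finset ι) {a : ι} (ha : a ∉ s) {α β : ℝ} (hα : 0 ≤ α) (hβ : 0 ≤ β) :
    (Fintype.card (Equiv.Perm ι) : ℝ)⁻¹ *
        ∑ ψ : Equiv.Perm ι, ‖α • ∑ k ∈ s, y (ψ k) + β • y (ψ a)‖ ^ 2
      ≤ (#s * α ^ 2 + β ^ 2) * ((Fintype.card ι : ℝ)⁻¹ * ∑ b, ‖y b‖ ^ 2) := by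
  set w : ι → ℝ := fun k => (if k ∈ s then α else 0) + (if k = a then β else 0)
  have hw : ∀ k, 0 ≤ w k := fun k => by positivity
  have hvec : ∀ ψ : Equiv.Perm ι, α • ∑ k ∈ s, y (ψ k) + β • y (ψ a) = ∑ k, w k • y (ψ k) :=
    fun ψ => by simp [w, add_smul, sum_add_distrib, ite_smul, smul_sum]
  have hw2 : ∑ k, w k ^ 2 = #s * α ^ 2 + β ^ 2 := by
    have hsq : ∀ k, w k ^ 2 = (if k ∈ s then α ^ 2 else 0) + (if k = a then β ^ 2 else 0) :=
      fun k => by by_cases hk : k = a <;> simp [w, hk, ha]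
    simp [hsq, sum_add_distrib]
  calc (Fintype.card (Equiv.Perm ι) : ℝ)⁻¹ *
          ∑ ψ : Equiv.Perm ι, ‖α • ∑ k ∈ s, y (ψ k) + β • y (ψ a)‖ ^ 2
      = (Fintype.card (Equiv.Perm ι) : ℝ)⁻¹ * ∑ ψ : Equiv.Perm ι, ‖∑ k, w k • y (ψ k)‖ ^ 2 := by
        simp only [hvec]
    _ ≤ (Fintype.card (Equiv.Perm ι) : ℝ)⁻¹ *
          ∑ k, w k ^ 2 * ∑ ψ : Equiv.Perm ι, ‖y (ψ k)‖ ^ 2 := by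
        gcongr
        exact sum_perm_norm_sum_smul_sq_le hy hw
    _ = (∑ k, w k ^ 2) * ((Fintype.card ι : ℝ)⁻¹ * ∑ b, ‖y b‖ ^ 2) := by
        rw [mul_sum, sum_mul]
        refine sum_congr rfl fun k _ => ?_
        rw [mul_left_comm, perm_average_apply (fun b => ‖y b‖ ^ 2) k]
    _ = (#s * α ^ 2 + β ^ 2) * ((Fintype.card ι : ℝ)⁻¹ * ∑ b, ‖y b‖ ^ 2) := by rw [hw2]

end PermutationSampling

theorem sum_range_sq_le (n : ℕ) : ∑ i ∈ range n, (i : ℝ) ^ 2 ≤ n ^ 3 / 2 := by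
  induction n with
  | zero => simp
  | succ n ih =>
    rw [sum_range_succ]
    push_cast
    nlinarith [(n.cast_nonneg : (0 : ℝ) ≤ n)]

theorem sum_Icc_sum_range_le (J I : ℕ) :
    ∑ c ∈ Icc 1 J, ∑ i ∈ range I, (((c - 1 : ℕ) : ℝ) * I ^ 2 + (i : ℝ) ^ 2)
      ≤ 1 / 2 * J ^ 2 * I ^ 3 := by
  induction J with
  | zero => simp
  | succ J ih =>
    rw [sum_Icc_succ_top (by omega), sum_add_distrib, sum_const, card_range, nsmul_eq_mul,
      Nat.add_sub_cancel]
    have := sum_range_sq_le I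
    push_cast
    nlinarith [(I.cast_nonneg : (0 : ℝ) ≤ I)]

/-- Sequential partial participation bound: for a uniformly random permutation ψ of the
C clients, with the inner double sum equal to I·∑_{k=1}^{c-1}(X_{ψ_k}-x̄) + i·(X_{ψ_c}-x̄),
the total expected squared deviation is at most (1/2)J²I³ν². -/
theorem stmt_12 {d C J I : ℕ} (hJC : J ≤ C)
    (x : Fin C → EuclideanSpace ℝ (Fin d)) :
    ∑ c ∈ (Finset.Icc 1 J).attach, ∑ i ∈ Finset.range I,
        ((Nat.factorial C : ℝ))⁻¹ *
          (∑ ψ : Equiv.Perm (Fin C),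
            ‖(I : ℝ) • (∑ k ∈ Finset.univ.filter (fun k : Fin C => (k : ℕ) < c.1 - 1),
                  (x (ψ k) - (C : ℝ)⁻¹ • ∑ j, x j))
              + (i : ℝ) • (x (ψ ⟨c.1 - 1, by
                    have hmem := Finset.mem_Icc.mp c.2; omega⟩)
                  - (C : ℝ)⁻¹ • ∑ j, x j)‖ ^ 2)
      ≤ (1 / 2 : ℝ) * J ^ 2 * I ^ 3
          * ((C : ℝ)⁻¹ * ∑ k, ‖x k - (C : ℝ)⁻¹ • ∑ j, x j‖ ^ 2) := by
  set y : Fin C → EuclideanSpace ℝ (Fin d) := fun k => x k - (C : ℝ)⁻¹ • ∑ j, x j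
  have hy : ∑ k, y k = 0 := by
    obtain rfl | hC := eq_or_ne C 0
    · simp
    simp only [y, sum_sub_distrib, sum_const, card_univ, Fintype.card_fin]
    rw [← Nat.cast_smul_eq_nsmul ℝ, smul_smul, mul_inv_cancel₀ (Nat.cast_ne_zero.mpr hC),
      one_smul, sub_self]
  set V := (C : ℝ)⁻¹ * ∑ k, ‖y k‖ ^ 2
  have hterm : ∀ c ∈ (Icc 1 J).attach, ∀ i ∈ range I,
      ((Nat.factorial C : ℝ))⁻¹ * ∑ ψ : Equiv.Perm (Fin C),
          ‖(I : ℝ) • ∑ k ∈ univ.filter (fun k : Fin C => (k : ℕ) < c.1 - 1), y (ψ k)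
            + (i : ℝ) • y (ψ ⟨c.1 - 1, by have hmem := mem_Icc.mp c.2; omega⟩)‖ ^ 2
        ≤ (((c.1 - 1 : ℕ) : ℝ) * I ^ 2 + (i : ℝ) ^ 2) * V := fun c _ i _ => by
    have hc := mem_Icc.mp c.2
    have key := perm_average_norm_smul_sum_add_smul_sq_le hy
      (univ.filter (fun k : Fin C => (k : ℕ) < c.1 - 1)) (a := ⟨c.1 - 1, by omega⟩)
      (by simp) (Nat.cast_nonneg I) (Nat.cast_nonneg i)
    rwa [Fintype.card_perm, Fintype.card_fin, Fin.card_filter_val_lt,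
      min_eq_right (by omega)] at key
  calc _ ≤ ∑ c ∈ (Icc 1 J).attach, ∑ i ∈ range I,
          (((c.1 - 1 : ℕ) : ℝ) * I ^ 2 + (i : ℝ) ^ 2) * V := sum_le_sum fun c hc =>
        sum_le_sum fun i hi => hterm c hc i hi
    _ = (∑ c ∈ Icc 1 J, ∑ i ∈ range I, (((c - 1 : ℕ) : ℝ) * I ^ 2 + (i : ℝ) ^ 2)) * V := by
        simp only [sum_mul]
        exact sum_attach (Icc 1 J) fun c => ∑ i ∈ range I,
          (((c - 1 : ℕ) : ℝ) * I ^ 2 + (i : ℝ) ^ 2) * V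
    _ ≤ 1 / 2 * J ^ 2 * I ^ 3 * V := by
        gcongr
        exact sum_Icc_sum_range_le J I
end
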